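/- Let E be the characteristic equation system of a finitary pLTS and ρ_E its greatest solution. Then for all states s and t: s ∼ t if and only if t ∈ ρ_E(X_s). -/

import Mathlib

open scoped Classical

/-- A (discrete) probability distribution over a finite set `S`. -/
structure FDist (S : Type*) [Fintype S] where
  f : S → ℝ
  nonneg : ∀ s, 0 ≤ f s
  sum_one : ∑ s, f s = 1

/-- The point distribution at `s`. -/
noncomputable def FDist.point {S : Type*} [Fintype S] (s : S) : FDist S where
  f := fun u => if u = s then 1 else 0
  nonneg := by intro u; by_cases h : u = s <;> simp [h]
  sum_one := by simp

/-- The lifting `R†` of a relation to distributions: the smallest relation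
relating point distributions of related states and closed under convex
combinations. -/
inductive Lift {S T : Type*} [Fintype S] [Fintype T] (R : S → T → Prop) :
    FDist S → FDist T → Prop
  | point {s : S} {t : T} :
      R s t → Lift R (FDist.point s) (FDist.point t)
  | convex (I : Finset ℕ) (p : ℕ → ℝ)
      (hp : ∀ i ∈ I, 0 ≤ p i) (hsum : ∑ i ∈ I, p i = 1)
      (Δs : ℕ → FDist S) (Θs : ℕ → FDist T)
      (h : ∀ i ∈ I, Lift R (Δs i) (Θs i))
      (Δ : FDist S) (Θ : FDist T)
      (hΔ : Δ.f = ∑ i ∈ I, p i • (Δs i).f)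
      (hΘ : Θ.f = ∑ i ∈ I, p i • (Θs i).f) :
      Lift R Δ Θ
/-- A (finitary) probabilistic labelled transition system over a finite set of
states. -/
structure PLTS (S : Type*) [Fintype S] (Act : Type*) where
  trans : S → Act → FDist S → Prop

/-- A pLTS is finitely branching if every state has finitely many outgoing
transitions; a finitary pLTS is a finitely branching pLTS with finitely many
states. -/
def FinitelyBranching {S : Type*} [Fintype S] {Act : Type*} (L : PLTS S Act) : Prop :=
  ∀ s, { p : Act × FDist S | L.trans s p.1 p.2 }.Finite

/-- `R` is a probabilistic bisimulation if, whenever `s R t`, each transition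
of either state is matched by a transition of the other, with the resulting
distributions related by the lifted relation `R†`. -/
def IsBisimulation {S : Type*} [Fintype S] {Act : Type*} (L : PLTS S Act)
    (R : S → S → Prop) : Prop :=
  ∀ s t, R s t →
    (∀ a Δ, L.trans s a Δ → ∃ Θ, L.trans t a Θ ∧ Lift R Δ Θ) ∧
    (∀ a Θ, L.trans t a Θ → ∃ Δ, L.trans s a Δ ∧ Lift R Δ Θ)

/-- Probabilistic bisimilarity `∼`: the largest probabilistic bisimulation. -/
def Bisim {S : Type*} [Fintype S] {Act : Type*} (L : PLTS S Act) (s t : S) : Prop :=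
  ∃ R, IsBisimulation L R ∧ R s t

mutual
/-- State formulae of the probabilistic modal mu-calculus, with variables
taken to be the states themselves (`X_s` for each state `s`):
`φ ::= ⊤ | ⊥ | ⟨a⟩ψ | [a]ψ | φ₁∧φ₂ | φ₁∨φ₂ | X | μX.φ | νX.φ`. -/
inductive MuF (Act S : Type) : Type
  | top : MuF Act S
  | bot : MuF Act S
  | dia (a : Act) (ψ : MuD Act S) : MuF Act S
  | box (a : Act) (ψ : MuD Act S) : MuF Act S
  | and (φ₁ φ₂ : MuF Act S) : MuF Act S
  | or (φ₁ φ₂ : MuF Act S) : MuF Act S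
  | var (X : S) : MuF Act S
  | mu (X : S) (φ : MuF Act S) : MuF Act S
  | nu (X : S) (φ : MuF Act S) : MuF Act S

/-- Distribution formulae `ψ ::= ⊕_{i∈I} p_i·φ_i` (probabilistic choice over a
finite tuple of probabilities summing to `1`), together with finite
disjunctions of distribution formulae (`⊥` being the empty disjunction), as
used in characteristic formulae. -/
inductive MuD (Act S : Type) : Type
  | pchoice (n : ℕ) (p : Fin n → ℝ)
      (hp : ∀ i, 0 ≤ p i) (hsum : ∑ i, p i = 1)
      (φ : Fin n → MuF Act S) : MuD Act S
  | dbot : MuD Act S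
  | dor (ψ₁ ψ₂ : MuD Act S) : MuD Act S
end

mutual
/-- The semantics `⟦φ⟧ρ ⊆ S` of a state formula in environment `ρ`; least and
greatest fixed points are given by Knaster–Tarski. -/
noncomputable def msem {S Act : Type} [Fintype S] [DecidableEq S] (L : PLTS S Act) :
    MuF Act S → (S → Set S) → Set S
  | .top, _ => Set.univ
  | .bot, _ => ∅
  | .dia a ψ, ρ => { s | ∃ Δ, L.trans s a Δ ∧ Δ ∈ dsem L ψ ρ }
  | .box a ψ, ρ => { s | ∀ Δ, L.trans s a Δ → Δ ∈ dsem L ψ ρ }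
  | .and φ₁ φ₂, ρ => msem L φ₁ ρ ∩ msem L φ₂ ρ
  | .or φ₁ φ₂, ρ => msem L φ₁ ρ ∪ msem L φ₂ ρ
  | .var X, ρ => ρ X
  | .mu X φ, ρ => ⋂₀ { V : Set S | msem L φ (Function.update ρ X V) ⊆ V }
  | .nu X φ, ρ => ⋃₀ { V : Set S | V ⊆ msem L φ (Function.update ρ X V) }

/-- The semantics `⟦ψ⟧ρ ⊆ D(S)` of a distribution formula:
`Δ ⊨ ⊕ᵢ pᵢ·φᵢ` iff `Δ` decomposes as a convex combination `∑ i, p i • Δs i`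
with every state in the support of `Δs i` satisfying `φ i`. -/
noncomputable def dsem {S Act : Type} [Fintype S] [DecidableEq S] (L : PLTS S Act) :
    MuD Act S → (S → Set S) → Set (FDist S)
  | .pchoice n p _ _ φ, ρ =>
      { Δ | ∃ Δs : Fin n → FDist S,
          Δ.f = ∑ i, p i • (Δs i).f ∧
          ∀ i, ∀ t, (Δs i).f t ≠ 0 → t ∈ msem L (φ i) ρ }
  | .dbot, _ => ∅
  | .dor ψ₁ ψ₂, ρ => dsem L ψ₁ ρ ∪ dsem L ψ₂ ρ
end
/-- The support of a distribution on a finite set, as a `Finset`. -/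
noncomputable def suppF {S : Type} [Fintype S] (Δ : FDist S) : Finset S :=
  Finset.univ.filter (fun t => Δ.f t ≠ 0)

/-- The distribution formula `X_Δ := ⊕_{s ∈ supp Δ} Δ(s)·X_s`. -/
noncomputable def XD {S Act : Type} [Fintype S] (Δ : FDist S) : MuD Act S :=
  MuD.pchoice (suppF Δ).card
    (fun i => Δ.f ((suppF Δ).equivFin.symm i))
    (fun _ => Δ.nonneg _)
    (by
      rw [Equiv.sum_comp (suppF Δ).equivFin.symm (fun x : (suppF Δ) => Δ.f x)]
      rw [Finset.sum_coe_sort]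
      rw [suppF, Finset.sum_filter_ne_zero]
      exact Δ.sum_one)
    (fun i => MuF.var ((suppF Δ).equivFin.symm i))

/-- Finite conjunction of state formulae (`⊤` for the empty conjunction). -/
def bigAnd {Act S : Type} : List (MuF Act S) → MuF Act S
  | [] => .top
  | φ :: l => .and φ (bigAnd l)

/-- Finite disjunction of distribution formulae (`⊥` for the empty one). -/
def bigDOr {Act S : Type} : List (MuD Act S) → MuD Act S
  | [] => .dbot
  | ψ :: l => .dor ψ (bigDOr l)

/-- The right-hand side `φ_s` of the characteristic equation for state `s`:
`φ_s := (⋀_{s −a→ Δ} ⟨a⟩X_Δ) ∧ (⋀_{a ∈ Act} [a] ⋁_{s −a→ Δ} X_Δ)`. -/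
noncomputable def charForm {S Act : Type} [Fintype S] [Fintype Act]
    (L : PLTS S Act) (hfb : FinitelyBranching L) (s : S) : MuF Act S :=
  MuF.and
    (bigAnd (((hfb s).toFinset.toList).map (fun q => MuF.dia q.1 (XD q.2))))
    (bigAnd (((Finset.univ : Finset Act).toList).map (fun a =>
      MuF.box a (bigDOr
        ((((hfb s).toFinset.filter (fun q => q.1 = a)).toList).map
          (fun q => XD q.2))))))

/-- The greatest solution `ρ_E` of the characteristic equation system: the
largest post-fixed point of the (monotone) equation functional
`ρ ↦ (X ↦ ⟦φ_X⟧ρ)` on the complete lattice of environments. -/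
noncomputable def charSolution {S Act : Type} [Fintype S] [DecidableEq S] [Fintype Act]
    (L : PLTS S Act) (hfb : FinitelyBranching L) : S → Set S :=
  sSup { ρ : S → Set S | ρ ≤ fun X => msem L (charForm L hfb X) ρ }

/-! The lifting `R†` is characterised by couplings: `Δ R† Θ` iff some joint distribution with
marginals `Δ` and `Θ` is supported on `R`, equivalently iff `Θ = ∑ u, Δ u • Θ_u` with
`supp Θ_u ⊆ R(u)`. For `R u v :↔ v ∈ ρ u` the latter is exactly `Θ ⊨_ρ X_Δ`, so `ρ` is a post-fixed
point of the equation functional iff `R` is a bisimulation. Since `ρ_E` is the join of all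
post-fixed points and joins of environments are pointwise unions, `t ∈ ρ_E(X_s)` iff some
bisimulation relates `s` and `t`. -/

open Finset

theorem Finset.sum_filter_smul_ne_zero {ι R M : Type*} [Semiring R] [AddCommMonoid M]
    [Module R M]
    (s : Finset ι) (w : ι → R) (F : ι → M) :
    ∑ i ∈ s with w i ≠ 0, w i • F i = ∑ i ∈ s, w i • F i :=
  sum_filter_of_ne fun _ _ hi h0 => hi (by rw [h0, zero_smul])

theorem mem_sSup_apply_iff {α β : Type*} {P : (α → Set β) → Prop} {a : α} {b : β} :
    b ∈ sSup {ρ | P ρ} a ↔ ∃ ρ, P ρ ∧ b ∈ ρ a := by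
  simp [sSup_apply]

namespace FDist

variable {S : Type*} [Fintype S]

theorem point_f_ne_zero {s u : S} (h : (point s).f u ≠ 0) : u = s := by
  by_contra hu
  simp [point, hu] at h

theorem eq_sum_smul_point (Δ : FDist S) : Δ.f = ∑ u, Δ.f u • (point u).f := by
  funext v
  rw [Finset.sum_apply, Finset.sum_eq_single v]
  · simp [point]
  · intro u _ hu
    simp [point, Ne.symm hu]
  · simp

theorem exists_mul_eq {c : ℝ} (hc : c ≠ 0) {g : S → ℝ} (hg : ∀ v, 0 ≤ g v)
    (hsum : ∑ v, g v = c) : ∃ Δ : FDist S, ∀ v, c * Δ.f v = g v := by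
  have hpos : 0 < c := lt_of_le_of_ne (hsum ▸ sum_nonneg fun v _ => hg v) (Ne.symm hc)
  refine ⟨⟨fun v => g v / c, fun v => div_nonneg (hg v) hpos.le, ?_⟩, fun v => ?_⟩
  · rw [← sum_div, hsum, div_self hc]
  · exact mul_div_cancel₀ (g v) hc

end FDist

section Lifting

variable {S T : Type*} [Fintype S] [Fintype T] {R : S → T → Prop}

theorem Lift.convex_countable {ι : Type*} [Countable ι] (I : Finset ι) (p : ι → ℝ)
    (hp : ∀ i ∈ I, 0 ≤ p i) (hsum : ∑ i ∈ I, p i = 1)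
    (Δs : ι → FDist S) (Θs : ι → FDist T) (h : ∀ i ∈ I, Lift R (Δs i) (Θs i))
    (Δ : FDist S) (Θ : FDist T)
    (hΔ : Δ.f = ∑ i ∈ I, p i • (Δs i).f) (hΘ : Θ.f = ∑ i ∈ I, p i • (Θs i).f) :
    Lift R Δ Θ := by
  obtain ⟨e, he⟩ := Countable.exists_injective_nat ι
  refine Lift.convex (I.map ⟨e, he⟩) (Function.extend e p 0) ?_ ?_
    (Function.extend e Δs fun _ => Δ) (Function.extend e Θs fun _ => Θ) ?_ Δ Θ ?_ ?_ <;>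
    simp only [Finset.forall_mem_map, Finset.sum_map, Function.Embedding.coeFn_mk,
      he.extend_apply] <;> assumption

structure IsCoupling (R : S → T → Prop) (Δ : FDist S) (Θ : FDist T) (ω : S → T → ℝ) :
    Prop where
  nonneg : ∀ u v, 0 ≤ ω u v
  left_marginal : ∀ u, ∑ v, ω u v = Δ.f u
  right_marginal : ∀ v, ∑ u, ω u v = Θ.f v
  rel : ∀ u v, ω u v ≠ 0 → R u v

theorem IsCoupling.lift {Δ : FDist S} {Θ : FDist T} {ω : S → T → ℝ}
    (hω : IsCoupling R Δ Θ ω) : Lift R Δ Θ := by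
  refine Lift.convex_countable (univ.filter fun q : S × T => ω q.1 q.2 ≠ 0) (fun q => ω q.1 q.2)
    (fun q _ => hω.nonneg _ _) ?_ (fun q => FDist.point q.1) (fun q => FDist.point q.2)
    (fun q hq => .point (hω.rel _ _ (mem_filter.1 hq).2)) Δ Θ ?_ ?_
  · simpa [Fintype.sum_prod_type, hω.left_marginal, Δ.sum_one] using
      sum_filter_smul_ne_zero univ (fun q : S × T => ω q.1 q.2) fun _ => (1 : ℝ)
  · rw [sum_filter_smul_ne_zero, Fintype.sum_prod_type]
    simp only [← sum_smul, hω.left_marginal]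
    exact Δ.eq_sum_smul_point
  · rw [sum_filter_smul_ne_zero, Fintype.sum_prod_type, sum_comm]
    simp only [← sum_smul, hω.right_marginal]
    exact Θ.eq_sum_smul_point

theorem isCoupling_point {s : S} {t : T} (h : R s t) :
    IsCoupling R (FDist.point s) (FDist.point t)
      (fun u v => (FDist.point s).f u * (FDist.point t).f v) where
  nonneg u v := mul_nonneg ((FDist.point s).nonneg u) ((FDist.point t).nonneg v)
  left_marginal u := by rw [← mul_sum, (FDist.point t).sum_one, mul_one]
  right_marginal v := by rw [← sum_mul, (FDist.point s).sum_one, one_mul]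
  rel u v huv := by
    rw [FDist.point_f_ne_zero (left_ne_zero_of_mul huv),
      FDist.point_f_ne_zero (right_ne_zero_of_mul huv)]
    exact h

theorem IsCoupling.convex {ι : Type*} {I : Finset ι} {p : ι → ℝ} (hp : ∀ i ∈ I, 0 ≤ p i)
    {Δs : ι → FDist S} {Θs : ι → FDist T} {ωs : ι → S → T → ℝ}
    (hωs : ∀ i ∈ I, IsCoupling R (Δs i) (Θs i) (ωs i)) {Δ : FDist S} {Θ : FDist T}
    (hΔ : Δ.f = ∑ i ∈ I, p i • (Δs i).f) (hΘ : Θ.f = ∑ i ∈ I, p i • (Θs i).f) :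
    IsCoupling R Δ Θ (fun u v => ∑ i ∈ I, p i * ωs i u v) where
  nonneg u v := sum_nonneg fun i hi => mul_nonneg (hp i hi) ((hωs i hi).nonneg u v)
  left_marginal u := by
    rw [sum_comm, hΔ, Finset.sum_apply]
    exact sum_congr rfl fun i hi => by rw [← mul_sum, (hωs i hi).left_marginal]; rfl
  right_marginal v := by
    rw [sum_comm, hΘ, Finset.sum_apply]
    exact sum_congr rfl fun i hi => by rw [← mul_sum, (hωs i hi).right_marginal]; rfl
  rel u v huv := by
    obtain ⟨i, hi, hne⟩ := exists_ne_zero_of_sum_ne_zero huv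
    exact (hωs i hi).rel u v (right_ne_zero_of_mul hne)

theorem Lift.exists_isCoupling {Δ : FDist S} {Θ : FDist T} (h : Lift R Δ Θ) :
    ∃ ω, IsCoupling R Δ Θ ω := by
  induction h with
  | point hst => exact ⟨_, isCoupling_point hst⟩
  | convex I p hp _ Δs Θs _ Δ Θ hΔ hΘ ih =>
    choose! ωs hωs using ih
    exact ⟨_, .convex hp hωs hΔ hΘ⟩

theorem lift_iff_exists_isCoupling {Δ : FDist S} {Θ : FDist T} :
    Lift R Δ Θ ↔ ∃ ω, IsCoupling R Δ Θ ω :=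
  ⟨Lift.exists_isCoupling, fun ⟨_, hω⟩ => hω.lift⟩

theorem IsCoupling.exists_mul_eq_row {Δ : FDist S} {Θ : FDist T} {ω : S → T → ℝ}
    (hω : IsCoupling R Δ Θ ω) (u : S) : ∃ Θu : FDist T, ∀ v, Δ.f u * Θu.f v = ω u v := by
  by_cases hu : Δ.f u = 0
  · have hrow := (sum_eq_zero_iff_of_nonneg fun v _ => hω.nonneg u v).1 (hω.left_marginal u ▸ hu)
    exact ⟨Θ, fun v => by rw [hu, zero_mul, hrow v (mem_univ v)]⟩
  · exact FDist.exists_mul_eq hu (hω.nonneg u) (hω.left_marginal u)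

theorem lift_iff_exists_decomp {Δ : FDist S} {Θ : FDist T} :
    Lift R Δ Θ ↔ ∃ Θm : S → FDist T, Θ.f = ∑ u, Δ.f u • (Θm u).f ∧
      ∀ u, Δ.f u ≠ 0 → ∀ v, (Θm u).f v ≠ 0 → R u v := by
  rw [lift_iff_exists_isCoupling]
  constructor
  · rintro ⟨ω, hω⟩
    choose Θm hΘm using hω.exists_mul_eq_row
    refine ⟨Θm, funext fun v => ?_, fun u hu v hv => hω.rel u v ?_⟩
    · simp only [Finset.sum_apply, Pi.smul_apply, smul_eq_mul, hΘm, hω.right_marginal]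
    · rw [← hΘm]
      exact mul_ne_zero hu hv
  · rintro ⟨Θm, hΘ, hrel⟩
    refine ⟨fun u v => Δ.f u * (Θm u).f v,
      ⟨fun u v => ?_, fun u => ?_, fun v => ?_, fun u v huv => ?_⟩⟩
    · exact mul_nonneg (Δ.nonneg u) ((Θm u).nonneg v)
    · rw [← mul_sum, (Θm u).sum_one, mul_one]
    · simp only [hΘ, Finset.sum_apply, Pi.smul_apply, smul_eq_mul]
    · exact hrel u (left_ne_zero_of_mul huv) v (right_ne_zero_of_mul huv)

end Lifting

section Semantics

variable {S Act : Type} [Fintype S] [DecidableEq S] (L : PLTS S Act)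

omit [DecidableEq S] in
theorem sum_suppF_equivFin {M : Type*} [AddCommMonoid M] [Module ℝ M] (Δ : FDist S)
    (F : S → M) :
    ∑ i, Δ.f ((suppF Δ).equivFin.symm i) • F ((suppF Δ).equivFin.symm i) =
      ∑ u, Δ.f u • F u := by
  rw [Equiv.sum_comp (suppF Δ).equivFin.symm (fun u => Δ.f u • F u),
    sum_coe_sort (suppF Δ) (fun u => Δ.f u • F u), suppF,
    sum_filter_smul_ne_zero]

theorem mem_dsem_XD_iff_lift (Δ Θ : FDist S) (ρ : S → Set S) :
    Θ ∈ dsem L (XD Δ) ρ ↔ Lift (fun u v => v ∈ ρ u) Δ Θ := by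
  rw [lift_iff_exists_decomp, XD]
  simp only [dsem, msem]
  constructor
  · rintro ⟨Δs, hΘ, hρ⟩
    refine ⟨fun u => if h : u ∈ suppF Δ then Δs ((suppF Δ).equivFin ⟨u, h⟩) else Θ, ?_,
      fun u hu v hv => ?_⟩
    · rw [hΘ, ← sum_suppF_equivFin Δ]
      simp
    · have hu' : u ∈ suppF Δ := by simpa [suppF] using hu
      simp only [dif_pos hu'] at hv
      simpa using hρ _ v hv
  · rintro ⟨Θm, hΘ, hρ⟩
    refine ⟨fun i => Θm ((suppF Δ).equivFin.symm i), by rw [hΘ, ← sum_suppF_equivFin Δ],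
      fun i v hv => hρ _ (mem_filter.1 ((suppF Δ).equivFin.symm i).2).2 v hv⟩

theorem mem_msem_bigAnd (l : List (MuF Act S)) (ρ : S → Set S) (t : S) :
    t ∈ msem L (bigAnd l) ρ ↔ ∀ φ ∈ l, t ∈ msem L φ ρ := by
  induction l with
  | nil => simp [bigAnd, msem]
  | cons φ l ih => simp [bigAnd, msem, ih]

theorem mem_dsem_bigDOr (l : List (MuD Act S)) (ρ : S → Set S) (Θ : FDist S) :
    Θ ∈ dsem L (bigDOr l) ρ ↔ ∃ ψ ∈ l, Θ ∈ dsem L ψ ρ := by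
  induction l with
  | nil => simp [bigDOr, dsem]
  | cons ψ l ih => simp [bigDOr, dsem, ih]

theorem mem_msem_charForm [Fintype Act] (hfb : FinitelyBranching L) (s t : S)
    (ρ : S → Set S) :
    t ∈ msem L (charForm L hfb s) ρ ↔
      (∀ a Δ, L.trans s a Δ → ∃ Θ, L.trans t a Θ ∧ Lift (fun u v => v ∈ ρ u) Δ Θ) ∧
      (∀ a Θ, L.trans t a Θ → ∃ Δ, L.trans s a Δ ∧ Lift (fun u v => v ∈ ρ u) Δ Θ) := by
  simp only [charForm, msem, Set.mem_inter_iff, mem_msem_bigAnd, List.forall_mem_map]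
  simp [mem_dsem_bigDOr, mem_dsem_XD_iff_lift]

theorem le_charForm_iff_isBisimulation [Fintype Act] (hfb : FinitelyBranching L)
    (ρ : S → Set S) :
    (ρ ≤ fun X => msem L (charForm L hfb X) ρ) ↔ IsBisimulation L (fun u v => v ∈ ρ u) :=
  forall_congr' fun s => ⟨fun h t hst => (mem_msem_charForm L hfb s t ρ).1 (h hst),
    fun h t hst => (mem_msem_charForm L hfb s t ρ).2 (h t hst)⟩

end Semantics

/-- For a finitary pLTS with characteristic equation system `E` and greatest
solution `ρ_E`: `s ∼ t` iff `t ∈ ρ_E(X_s)`. -/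
theorem bisim_iff_mem_charSolution {S Act : Type} [Fintype S] [DecidableEq S]
    [Fintype Act] (L : PLTS S Act) (hfb : FinitelyBranching L) (s t : S) :
    Bisim L s t ↔ t ∈ charSolution L hfb s := by
  simp only [charSolution, mem_sSup_apply_iff, le_charForm_iff_isBisimulation]
  exact ⟨fun ⟨R, hR, hst⟩ => ⟨fun u => {v | R u v}, hR, hst⟩,
    fun ⟨_, hρ, ht⟩ => ⟨_, hρ, ht⟩⟩
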